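/- arXiv:1701.07092 — 6 statements merged into one kernel-verified Lean document; each statement's English description precedes it below -/
import Mathlib

section
/- Let $b,c$ be positive integers. For all positive integers $i,j$: $\sum_{s=1}^{\min\{i,j\}} A(b,c,i,s)\cdot C(b,c,s,j) = \binom{b+c}{c+j-i}$, where the binomial coefficient on the right is taken with the convention that it is $0$ unless $0 \le c+j-i \le b+c$. -/
/-- The binomial coefficient for integer arguments, over ℚ:
`n!/((n-k)! k!)` if `0 ≤ k ≤ n`, and `0` otherwise. -/
noncomputable def ibinom (n k : ℤ) : ℚ :=
  if 0 ≤ k ∧ k ≤ n then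
    (Nat.factorial n.toNat : ℚ) / (Nat.factorial (n - k).toNat * Nat.factorial k.toNat)
  else 0

/-- The entry `A(b,c,i,j)` of the lower-triangular factor. -/
noncomputable def Afun (b c i j : ℕ) : ℚ :=
  if j ≤ i ∧ i ≤ c + j then
    (Nat.factorial c * Nat.factorial (i - 1) * Nat.factorial (b + j - 1) : ℚ) /
      (Nat.factorial (j - 1) * Nat.factorial (b + i - 1) * Nat.factorial (i - j) *
        Nat.factorial (c + j - i))
  else 0

/-- The entry `C(b,c,i,j)` of the upper-triangular factor. -/
noncomputable def Cfun (b c i j : ℕ) : ℚ :=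
  if i ≤ j ∧ j ≤ b + i then
    (Nat.factorial b * Nat.factorial (j - 1) * Nat.factorial (b + c + i - 1) : ℚ) /
      (Nat.factorial (b + i - 1) * Nat.factorial (c + j - 1) * Nat.factorial (j - i) *
        Nat.factorial (b + i - j))
  else 0

/-- The entry `D(i)` (last column of the upper-triangular factor), in the
integer parameters `n, m`. -/
noncomputable def Dfun (b c : ℕ) (n m : ℤ) (i : ℕ) : ℚ :=
  ∑ v ∈ Finset.Icc 1 i, (-1 : ℚ) ^ (i - v) *
    ((Nat.factorial (i - 1) * Nat.factorial (b + v - 1) * Nat.factorial (c + i - v - 1) : ℚ) /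
      (Nat.factorial (c - 1) * Nat.factorial (v - 1) * Nat.factorial (b + i - 1) *
        Nat.factorial (i - v))) * ibinom n (m - v)

/-- The entry `B(j)` (last row of the lower-triangular factor), in the
integer parameters `n', m'`. -/
noncomputable def Bfun (b c : ℕ) (n' m' : ℤ) (j : ℕ) : ℚ :=
  ∑ v ∈ Finset.Icc 1 j, (-1 : ℚ) ^ (j - v) *
    ((Nat.factorial (b + j - 1) * Nat.factorial (c + v - 1) * Nat.factorial (b + j - v - 1) : ℚ) /
      (Nat.factorial (b - 1) * Nat.factorial (v - 1) * Nat.factorial (j - v) *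
        Nat.factorial (b + c + j - 1))) * ibinom n' (v - m')

/-- MacMahon's product formula for the number of rhombus tilings of the
semi-regular hexagon with side lengths `a, b, c`. -/
noncomputable def macmahon (a b c : ℕ) : ℚ :=
  ∏ i ∈ Finset.Icc 1 a, ∏ j ∈ Finset.Icc 1 b, ∏ k ∈ Finset.Icc 1 c,
    (((i : ℚ) + j + k - 1) / ((i : ℚ) + j + k - 2))

/-!
Up to the factor `K = (b+c)! (i-1)! (j-1)! / ((b+i-1)! (c+j-1)!)`, the summand
`A(b,c,i,s) C(b,c,s,j)` is `binom(c, i-s) binom(b, j-s) binom(b+c+s-1, b+c)`. Its sum over `s`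
is a terminating balanced `₃F₂` at `1`, so by Pfaff–Saalschütz it equals
`binom(b+i-1, j-1) binom(c+j-1, i-1)`, and multiplying back by `K` gives `binom(b+c, c+j-i)`.
The Saalschütz sum is proved by showing that both sides satisfy the same first-order recurrence
in `i` (for the sum, via a WZ certificate that telescopes in `s`); its leading coefficient
`i (b+i-j+1)` vanishes only for `i = 0` and `j = b+i+1`, where the sum collapses to a single term.
-/

open Nat

lemma ibinom_of_neg {n k : ℤ} (h : k < 0) : ibinom n k = 0 := by
  rw [ibinom, if_neg (by omega)]

lemma ibinom_of_lt {n k : ℤ} (h : n < k) : ibinom n k = 0 := by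
  rw [ibinom, if_neg (by omega)]

lemma ibinom_natCast (n k : ℕ) : ibinom n k = n.choose k := by
  by_cases h : k ≤ n
  · rw [ibinom, if_pos (by omega), Nat.cast_choose ℚ h, mul_comm]
    simp [← Nat.cast_sub h]
  · rw [ibinom_of_lt (by omega), Nat.choose_eq_zero_of_lt (by omega), Nat.cast_zero]

lemma ibinom_natCast_of_le {n k : ℕ} (h : k ≤ n) : ibinom n k = n ! / (k ! * (n - k)!) := by
  rw [ibinom_natCast, Nat.cast_choose ℚ h]

lemma ibinom_symm (n k : ℤ) : ibinom n (n - k) = ibinom n k := by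
  unfold ibinom
  split_ifs <;> first | rfl | omega | rw [sub_sub_cancel, mul_comm]

lemma ibinom_zero_right {n : ℤ} (h : 0 ≤ n) : ibinom n 0 = 1 := by
  lift n to ℕ using h
  simpa using ibinom_natCast n 0

lemma ibinom_self {n : ℤ} (h : 0 ≤ n) : ibinom n n = 1 := by
  simpa [ibinom_zero_right h] using ibinom_symm n 0

lemma cast_mul_ibinom (n k : ℤ) : k * ibinom n k = (n - k + 1) * ibinom n (k - 1) := by
  rcases lt_or_ge k 1 with hk | hk
  · rw [ibinom_of_neg (show k - 1 < 0 by omega)]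
    obtain rfl | hk := eq_or_lt_of_le (show k ≤ 0 by omega)
    · simp
    · simp [ibinom_of_neg hk]
  rcases lt_or_ge n k with hn | hn
  · rw [ibinom_of_lt hn]
    obtain rfl | hn' := eq_or_lt_of_le (show n + 1 ≤ k by omega)
    · push_cast; ring
    · rw [ibinom_of_lt (show n < k - 1 by omega)]; ring
  obtain ⟨k, rfl⟩ : ∃ k' : ℕ, k = k' + 1 := ⟨(k - 1).toNat, by omega⟩
  lift n to ℕ using (by omega)
  have hk : k ≤ n := by omega
  have key := Nat.choose_succ_right_eq n k
  qify [hk] at key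
  have hcast := ibinom_natCast n (k + 1)
  push_cast at hcast
  rw [add_sub_cancel_right, ibinom_natCast, hcast]
  push_cast
  linear_combination key

lemma ibinom_succ_left (n k : ℤ) : (n + 1 - k) * ibinom (n + 1) k = (n + 1) * ibinom n k := by
  rcases lt_or_ge k 0 with hk | hk
  · simp [ibinom_of_neg hk]
  rcases lt_or_ge n k with hn | hn
  · rw [ibinom_of_lt hn]
    obtain rfl | hn' := eq_or_lt_of_le (show n + 1 ≤ k by omega)
    · push_cast; ring
    · rw [ibinom_of_lt hn']; ring
  lift k to ℕ using hk
  lift n to ℕ using (by omega)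
  have hk : k ≤ n + 1 := by omega
  have key := Nat.choose_mul_succ_eq n k
  qify [hk] at key
  have hcast := ibinom_natCast (n + 1) k
  push_cast at hcast
  rw [hcast, ibinom_natCast]
  linear_combination -key

section Saalschutz

variable (b c : ℕ) (j : ℤ)

noncomputable def saalschutzTerm (i s : ℕ) : ℚ :=
  ibinom c (i - s) * ibinom b (j - s) * ibinom (b + c + s - 1) (b + c)

lemma saalschutzTerm_zero_right (i : ℕ) : saalschutzTerm b c j i 0 = 0 := by
  rw [saalschutzTerm, ibinom_of_lt (k := b + c) (by push_cast; omega), mul_zero]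

/-- A WZ certificate for `saalschutzTerm` in the variable `i`, as produced by Zeilberger's
algorithm. -/
noncomputable def saalschutzCert (i s : ℕ) : ℚ :=
  (1 - s) * (b - j + s) * ibinom c (i - s + 1) * ibinom b (j - s) *
    ibinom (b + c + s - 1) (b + c)

lemma saalschutzTerm_recurrence (i s : ℕ) :
    i * (b + i - j + 1) * saalschutzTerm b c j (i + 1) s
        - (b + i) * (c + j - i) * saalschutzTerm b c j i s
      = saalschutzCert b c j i (s + 1) - saalschutzCert b c j i s := by
  have hc := cast_mul_ibinom c (i - s + 1)
  have hb := cast_mul_ibinom b (j - s)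
  have hbc := ibinom_succ_left (b + c + s - 1) (b + c)
  simp only [saalschutzTerm, saalschutzCert, Nat.cast_add, Nat.cast_one]
  rw [show (i : ℤ) + 1 - s = i - s + 1 by ring, show (i : ℤ) - (s + 1) + 1 = i - s by ring,
    show (b : ℤ) + c + (s + 1) - 1 = b + c + s by ring, show j - (s + 1) = j - s - 1 by ring]
  rw [show (i : ℤ) - s + 1 - 1 = i - s by ring] at hc
  rw [show (b : ℤ) + c + s - 1 + 1 = b + c + s by ring] at hbc
  push_cast at hc hb hbc
  linear_combination
    ((s : ℚ) + b + i - j) * ibinom b (j - s) * ibinom (b + c + s - 1) (b + c) * hc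
    - (s : ℚ) * ibinom c (i - s) * ibinom (b + c + s) (b + c) * hb
    + ((j : ℚ) - s) * ibinom c (i - s) * ibinom b (j - s) * hbc

lemma sum_saalschutzTerm_recurrence (i : ℕ) :
    i * (b + i - j + 1) * ∑ s ∈ Finset.range (i + 2), saalschutzTerm b c j (i + 1) s
      = (b + i) * (c + j - i) * ∑ s ∈ Finset.range (i + 1), saalschutzTerm b c j i s := by
  have htop : saalschutzTerm b c j i (i + 1) = 0 := by
    rw [saalschutzTerm, ibinom_of_neg (by push_cast; omega), zero_mul, zero_mul]
  have hcert_top : saalschutzCert b c j i (i + 2) = 0 := by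
    rw [saalschutzCert, ibinom_of_neg (n := c) (by push_cast; omega)]; ring
  have hcert_zero : saalschutzCert b c j i 0 = 0 := by
    rw [saalschutzCert, ibinom_of_lt (k := b + c) (by push_cast; omega), mul_zero]
  have htel := Finset.sum_range_sub (saalschutzCert b c j i) (i + 2)
  rw [← Finset.sum_congr rfl fun s _ ↦ saalschutzTerm_recurrence b c j i s,
    Finset.sum_sub_distrib, ← Finset.mul_sum, ← Finset.mul_sum,
    Finset.sum_range_succ (saalschutzTerm b c j i) (i + 1), htop, add_zero, hcert_top,
    hcert_zero] at htel
  linear_combination htel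

noncomputable def saalschutzClosedForm (i : ℕ) : ℚ :=
  ibinom (b + i - 1) (j - 1) * ibinom (c + j - 1) (i - 1)

lemma saalschutzClosedForm_recurrence (i : ℕ) :
    (b + i) * (c + j - i) * saalschutzClosedForm b c j i
      = i * (b + i - j + 1) * saalschutzClosedForm b c j (i + 1) := by
  have hb := ibinom_succ_left (b + i - 1) (j - 1)
  have hc := cast_mul_ibinom (c + j - 1) i
  simp only [saalschutzClosedForm, Nat.cast_add, Nat.cast_one, add_sub_cancel_right]
  rw [show (b : ℤ) + (i + 1) - 1 = b + i by ring]
  rw [show (b : ℤ) + i - 1 + 1 = b + i by ring] at hb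
  push_cast at hb hc
  linear_combination (-(i : ℚ)) * ibinom (c + j - 1) i * hb
    - ((b : ℚ) + i) * ibinom (b + i - 1) (j - 1) * hc

lemma sum_saalschutzTerm_one :
    ∑ s ∈ Finset.range 2, saalschutzTerm b c j 1 s = saalschutzClosedForm b c j 1 := by
  rw [Finset.sum_range_succ, Finset.sum_range_one, saalschutzTerm_zero_right, zero_add]
  simp only [saalschutzTerm, saalschutzClosedForm]
  push_cast
  simp only [add_sub_cancel_right]
  rw [ibinom_zero_right (by positivity), ibinom_self (by positivity)]
  rcases lt_or_ge j 1 with hj | hj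
  · rw [ibinom_of_neg (show j - 1 < 0 by omega)]; ring
  · rw [ibinom_zero_right (by omega)]; ring

lemma sum_saalschutzTerm_of_eq (i : ℕ) (h : j = b + i + 1) :
    ∑ s ∈ Finset.range (i + 2), saalschutzTerm b c j (i + 1) s
      = saalschutzClosedForm b c j (i + 1) := by
  subst h
  rw [Finset.sum_eq_single_of_mem (i + 1) (by simp)]
  · simp only [saalschutzTerm, saalschutzClosedForm]
    push_cast
    rw [sub_self, show (b : ℤ) + i + 1 - (i + 1) = b by ring,
      show (b : ℤ) + c + (i + 1) - 1 = b + c + i by ring,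
      show (b : ℤ) + (i + 1) - 1 = b + i by ring, show (b : ℤ) + i + 1 - 1 = b + i by ring,
      show (c : ℤ) + (b + i + 1) - 1 = b + c + i by ring, add_sub_cancel_right,
      ibinom_zero_right (by positivity), ibinom_self (by positivity), ibinom_self (by positivity),
      ← ibinom_symm _ (i : ℤ), show (b : ℤ) + c + i - i = b + c by ring]
    ring
  · intro s hs hne
    have hsi : s ≤ i := by simp at hs; omega
    rw [saalschutzTerm, ibinom_of_lt (n := b) (by omega)]
    ring

theorem sum_saalschutzTerm (i : ℕ) :
    ∑ s ∈ Finset.range (i + 1), saalschutzTerm b c j i s = saalschutzClosedForm b c j i := by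
  induction i with
  | zero =>
    rw [zero_add, Finset.sum_range_one, saalschutzTerm_zero_right, saalschutzClosedForm,
      ibinom_of_neg (n := c + j - 1) (by simp), mul_zero]
  | succ i ih =>
    rcases Nat.eq_zero_or_pos i with rfl | hi
    · exact sum_saalschutzTerm_one b c j
    by_cases hj : j = b + i + 1
    · exact sum_saalschutzTerm_of_eq b c j i hj
    have hne : (i * (b + i - j + 1) : ℚ) ≠ 0 := by
      have : (b + i - j + 1 : ℚ) = ((b + i - j + 1 : ℤ) : ℚ) := by push_cast; ring
      rw [this]
      exact mul_ne_zero (by positivity) (by exact_mod_cast (show b + i - j + 1 ≠ 0 by omega))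
    apply mul_left_cancel₀ hne
    rw [sum_saalschutzTerm_recurrence, ih, saalschutzClosedForm_recurrence]

end Saalschutz

lemma Afun_eq (b c i s : ℕ) :
    Afun b c i s = ibinom c (i - s) * ((i - 1)! * (b + s - 1)! / ((s - 1)! * (b + i - 1)!)) := by
  unfold Afun ibinom
  split_ifs with h h'
  · rw [show ((c : ℤ) - (i - s)).toNat = c + s - i by omega,
      show ((i : ℤ) - s).toNat = i - s by omega, Int.toNat_natCast]
    field_simp
  all_goals first | omega | simp

lemma Cfun_eq (b c s j : ℕ) :
    Cfun b c s j
      = ibinom b (j - s) * ((j - 1)! * (b + c + s - 1)! / ((c + j - 1)! * (b + s - 1)!)) := by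
  unfold Cfun ibinom
  split_ifs with h h'
  · rw [show ((b : ℤ) - (j - s)).toNat = b + s - j by omega,
      show ((j : ℤ) - s).toNat = j - s by omega, Int.toNat_natCast]
    field_simp
  all_goals first | omega | simp

lemma Afun_mul_Cfun (b c i j s : ℕ) (hs : 0 < s) :
    Afun b c i s * Cfun b c s j
      = (b + c)! * (i - 1)! * (j - 1)! / ((b + i - 1)! * (c + j - 1)!) *
          saalschutzTerm b c j i s := by
  rw [Afun_eq, Cfun_eq, saalschutzTerm, show (b : ℤ) + c + s - 1 = (b + c + s - 1 : ℕ) by omega,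
    show (b : ℤ) + c = (b + c : ℕ) by omega, ibinom_natCast_of_le (by omega),
    show b + c + s - 1 - (b + c) = s - 1 by omega]
  field_simp

lemma mul_saalschutzClosedForm (b c i j : ℕ) (hi : 0 < i) (hj : 0 < j) :
    (b + c)! * (i - 1)! * (j - 1)! / ((b + i - 1)! * (c + j - 1)! : ℚ) *
        saalschutzClosedForm b c j i
      = ibinom (b + c) (c + j - i) := by
  rw [saalschutzClosedForm]
  by_cases h : j ≤ b + i ∧ i ≤ c + j
  · rw [show (b : ℤ) + i - 1 = (b + i - 1 : ℕ) by omega, show (j : ℤ) - 1 = (j - 1 : ℕ) by omega,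
      show (c : ℤ) + j - 1 = (c + j - 1 : ℕ) by omega, show (i : ℤ) - 1 = (i - 1 : ℕ) by omega,
      show (c : ℤ) + j - i = (c + j - i : ℕ) by omega, show (b : ℤ) + c = (b + c : ℕ) by omega,
      ibinom_natCast_of_le (by omega), ibinom_natCast_of_le (by omega),
      ibinom_natCast_of_le (by omega),
      show b + i - 1 - (j - 1) = b + c - (c + j - i) by omega,
      show c + j - 1 - (i - 1) = c + j - i by omega]
    field_simp
  · rcases not_and_or.1 h with h | h
    · rw [ibinom_of_lt (n := b + i - 1) (by omega), ibinom_of_lt (n := b + c) (by omega)]; ring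
    · rw [ibinom_of_lt (n := c + j - 1) (by omega), ibinom_of_neg (n := b + c) (by omega)]; ring

theorem statement_0_general (b c : ℕ) (i j : ℕ) (hi : 0 < i) (hj : 0 < j) :
    ∑ s ∈ Finset.Icc 1 (min i j), Afun b c i s * Cfun b c s j
      = ibinom ((b : ℤ) + c) ((c : ℤ) + j - i) := by
  have hsupport : ∑ s ∈ Finset.Icc 1 (min i j), saalschutzTerm b c j i s
      = ∑ s ∈ Finset.range (i + 1), saalschutzTerm b c j i s := by
    refine Finset.sum_subset (fun s hs ↦ by simp at hs ⊢; omega) fun s hs' hs ↦ ?_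
    rcases Nat.eq_zero_or_pos s with rfl | hs0
    · exact saalschutzTerm_zero_right b c j i
    · rw [saalschutzTerm, ibinom_of_neg (n := b) (by simp at hs hs'; omega)]; ring
  rw [Finset.sum_congr rfl fun s hs ↦ Afun_mul_Cfun b c i j s (by simp at hs; omega),
    ← Finset.mul_sum, hsupport, sum_saalschutzTerm, mul_saalschutzClosedForm b c i j hi hj]

/-- for positive integers `b, c, i, j`,
`∑_{s=1}^{min(i,j)} A(b,c,i,s) ⬝ C(b,c,s,j) = binom(b+c, c+j-i)`. -/
theorem statement_0 (b c : ℕ) (hb : 0 < b) (hc : 0 < c) (i j : ℕ) (hi : 0 < i) (hj : 0 < j) :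
    ∑ s ∈ Finset.Icc 1 (min i j), Afun b c i s * Cfun b c s j
      = ibinom ((b : ℤ) + c) ((c : ℤ) + j - i) :=
  statement_0_general b c i j hi hj
end

section
/- Let $b,c$ be positive integers and define $T(i,j) := \sum_{s=1}^{\min\{i,j\}} A(b,c,i,s)\cdot C(b,c,s,j)$. Then for all positive integers $i,j$: $(b+i-j+1)\cdot T(i+1,j) + (i-j-c)\cdot T(i,j) = 0$. -/
/-!
The summand `F(i,s) = A(i,s) C(s,j)` is hypergeometric in `i` and `s`: `A` and `C` satisfy
first-order shift relations in each index, which hold for all `s ≥ 1` because at the edges of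
the supports the vanishing entry is matched by a vanishing linear factor. Clearing the
denominators `(b+i)(b+s)`, these relations show that `i` times the recurrence applied to
`F(·,s)` is `R(s+1) - R(s)` for the Zeilberger certificate `R(s) = (s-1)(j-b-s) F(i+1,s)`.
Summing over `1 ≤ s ≤ i+1` telescopes to `R(i+2) - R(1) = 0`.
-/

namespace Afun

variable (b c : ℕ)

theorem eq_zero_of_lt {i j : ℕ} (h : i < j) : Afun b c i j = 0 :=
  if_neg (by omega)

theorem succ_left {i s : ℕ} (hs : 1 ≤ s) :
    ((b : ℚ) + i) * ((i : ℚ) + 1 - s) * Afun b c (i + 1) s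
      = i * ((c : ℚ) + s - i) * Afun b c i s := by
  unfold Afun
  split_ifs with h₁ h₂
  · rw [show i + 1 - 1 = (i - 1) + 1 by omega, show b + (i + 1) - 1 = (b + i - 1) + 1 by omega,
      show i + 1 - s = (i - s) + 1 by omega, show c + s - i = (c + s - (i + 1)) + 1 by omega,
      ← mul_div_assoc, ← mul_div_assoc, div_eq_div_iff (by positivity) (by positivity)]
    simp only [Nat.factorial_succ]
    push_cast [Nat.cast_sub (show 1 ≤ i by omega), Nat.cast_sub (show 1 ≤ b + i by omega),
      Nat.cast_sub h₂.1, Nat.cast_sub h₁.2]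
    ring
  · obtain rfl : s = i + 1 := by omega
    push_cast
    ring
  · obtain rfl : i = c + s := by omega
    push_cast
    ring
  · simp

theorem succ_succ {i s : ℕ} (hs : 1 ≤ s) :
    (s : ℚ) * ((b : ℚ) + i) * Afun b c (i + 1) (s + 1)
      = i * ((b : ℚ) + s) * Afun b c i s := by
  unfold Afun
  split_ifs with h₁ h₂
  · rw [show i + 1 - 1 = (i - 1) + 1 by omega, show b + (i + 1) - 1 = (b + i - 1) + 1 by omega,
      show s + 1 - 1 = (s - 1) + 1 by omega, show b + (s + 1) - 1 = (b + s - 1) + 1 by omega,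
      show i + 1 - (s + 1) = i - s by omega, show c + (s + 1) - (i + 1) = c + s - i by omega,
      ← mul_div_assoc, ← mul_div_assoc, div_eq_div_iff (by positivity) (by positivity)]
    simp only [Nat.factorial_succ]
    push_cast [Nat.cast_sub (show 1 ≤ i by omega), Nat.cast_sub hs,
      Nat.cast_sub (show 1 ≤ b + i by omega), Nat.cast_sub (show 1 ≤ b + s by omega)]
    ring
  · exact absurd (by omega) h₂
  · exact absurd (by omega) h₁
  · simp

end Afun

namespace Cfun

variable (b c : ℕ)

theorem eq_zero_of_lt {i j : ℕ} (h : j < i) : Cfun b c i j = 0 :=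
  if_neg (by omega)

theorem succ_left {s j : ℕ} (hs : 1 ≤ s) :
    ((b : ℚ) + s) * ((b : ℚ) + s + 1 - j) * Cfun b c (s + 1) j
      = ((b : ℚ) + c + s) * ((j : ℚ) - s) * Cfun b c s j := by
  unfold Cfun
  split_ifs with h₁ h₂
  · rw [show b + (s + 1) - 1 = (b + s - 1) + 1 by omega,
      show b + c + (s + 1) - 1 = (b + c + s - 1) + 1 by omega,
      show j - s = (j - (s + 1)) + 1 by omega, show b + (s + 1) - j = (b + s - j) + 1 by omega,
      ← mul_div_assoc, ← mul_div_assoc, div_eq_div_iff (by positivity) (by positivity)]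
    simp only [Nat.factorial_succ]
    push_cast [Nat.cast_sub (show 1 ≤ b + s by omega), Nat.cast_sub (show 1 ≤ b + c + s by omega),
      Nat.cast_sub h₁.1, Nat.cast_sub h₂.2]
    ring
  · obtain rfl : j = b + s + 1 := by omega
    push_cast
    ring
  · obtain rfl : j = s := by omega
    ring
  · simp

end Cfun

noncomputable def zeilbergerCertificate (b c i j s : ℕ) : ℚ :=
  ((s : ℚ) - 1) * ((j : ℚ) - b - s) * (Afun b c (i + 1) s * Cfun b c s j)

theorem summand_eq_certificate_sub (b c j : ℕ) {i s : ℕ} (hi : 1 ≤ i) (hs : 1 ≤ s) :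
    (i : ℚ) * (((b : ℚ) + i - j + 1) * (Afun b c (i + 1) s * Cfun b c s j)
        + ((i : ℚ) - j - c) * (Afun b c i s * Cfun b c s j))
      = zeilbergerCertificate b c i j (s + 1) - zeilbergerCertificate b c i j s := by
  have hbi : (b : ℚ) + i ≠ 0 := by positivity
  have hbs : (b : ℚ) + s ≠ 0 := by positivity
  refine mul_left_cancel₀ (mul_ne_zero hbi hbs) ?_
  unfold zeilbergerCertificate
  push_cast
  linear_combination
    ((b : ℚ) + s) * ((b : ℚ) + i + s - j) * Cfun b c s j * Afun.succ_left b c (i := i) hs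
    + ((b : ℚ) + s) * ((b : ℚ) + s + 1 - j) * Cfun b c (s + 1) j * Afun.succ_succ b c (i := i) hs
    + i * ((b : ℚ) + s) * Afun b c i s * Cfun.succ_left b c (j := j) hs

theorem sum_Icc_min_eq_sum_Icc (b c : ℕ) {m n : ℕ} (j : ℕ) (hmn : m ≤ n) :
    ∑ s ∈ Finset.Icc 1 (min m j), Afun b c m s * Cfun b c s j
      = ∑ s ∈ Finset.Icc 1 n, Afun b c m s * Cfun b c s j := by
  refine Finset.sum_subset (Finset.Icc_subset_Icc_right (by omega)) fun s hs hs' => ?_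
  simp only [Finset.mem_Icc] at hs hs'
  rcases Nat.lt_or_ge m s with h | h
  · rw [Afun.eq_zero_of_lt b c h, zero_mul]
  · rw [Cfun.eq_zero_of_lt b c (by omega), mul_zero]

theorem statement_1_general (b c : ℕ) (i j : ℕ) (hi : 0 < i) :
    ((b : ℚ) + i - j + 1) *
        (∑ s ∈ Finset.Icc 1 (min (i + 1) j), Afun b c (i + 1) s * Cfun b c s j)
      + ((i : ℚ) - j - c) * (∑ s ∈ Finset.Icc 1 (min i j), Afun b c i s * Cfun b c s j)
      = 0 := by
  rw [sum_Icc_min_eq_sum_Icc b c j le_rfl, sum_Icc_min_eq_sum_Icc b c j (Nat.le_succ i)]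
  have htele : ∑ s ∈ Finset.Icc 1 (i + 1), (zeilbergerCertificate b c i j (s + 1)
      - zeilbergerCertificate b c i j s) = 0 := by
    rw [Finset.sum_Icc_sub (by omega), zeilbergerCertificate, zeilbergerCertificate,
      Afun.eq_zero_of_lt b c (Nat.lt_succ_self _)]
    simp
  rw [← Finset.sum_congr rfl fun s hs => summand_eq_certificate_sub b c j hi
    (Finset.mem_Icc.mp hs).1, ← Finset.mul_sum, Finset.sum_add_distrib, ← Finset.mul_sum,
    ← Finset.mul_sum] at htele
  exact (mul_eq_zero.mp htele).resolve_left (by positivity)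

/-- with `T(i,j) = ∑_{s=1}^{min(i,j)} A(b,c,i,s) ⬝ C(b,c,s,j)`,
`(b+i-j+1) T(i+1,j) + (i-j-c) T(i,j) = 0`. -/
theorem statement_1 (b c : ℕ) (hb : 0 < b) (hc : 0 < c) (i j : ℕ) (hi : 0 < i) (hj : 0 < j) :
    ((b : ℚ) + i - j + 1) *
        (∑ s ∈ Finset.Icc 1 (min (i + 1) j), Afun b c (i + 1) s * Cfun b c s j)
      + ((i : ℚ) - j - c) * (∑ s ∈ Finset.Icc 1 (min i j), Afun b c i s * Cfun b c s j)
      = 0 :=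
  statement_1_general b c i j hi
end

section
/- Let $b,c$ be positive integers and $n',m'$ arbitrary integers. For every positive integer $j$: $\sum_{s=1}^{j} B_{b,c,n',m'}(s)\cdot C(b,c,s,j) = \binom{n'}{j-m'}$. -/
/-!
With `β v = ibinom n' (v - m')`, the row `Bfun b c n' m'` is `β · Cinv` for the explicit
upper-triangular matrix `Cinv` below, so the sum is `β · Cinv · Cfun` and it suffices that `Cinv`
inverts `Cfun`. On the diagonal the factorials cancel. Off the diagonal, in column `j = v + N`,
the entry `∑ₛ Cinv v s * Cfun s j` is a constant times the `N`-th alternating binomial sum of the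
falling factorial `(b + t - 1)(b + t - 2)⋯(b + t - N + 1)`, a polynomial in `t = s - v` of degree
`N - 1`, and so vanishes.
-/

open Finset Polynomial
open scoped Nat

theorem Polynomial.sum_range_alternating_choose_mul_eval_eq_zero {R : Type*} [CommRing R]
    {p : R[X]} {N : ℕ} (hp : p.natDegree < N) :
    ∑ t ∈ range (N + 1), (-1 : R) ^ t * N.choose t * p.eval (t : R) = 0 := by
  have h := congr_fun (fwdDiff_iter_eq_zero_of_degree_lt hp) 0
  rw [fwdDiff_iter_eq_sum_shift] at h
  calc ∑ t ∈ range (N + 1), (-1 : R) ^ t * N.choose t * p.eval (t : R)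
      = (-1) ^ N * ∑ t ∈ range (N + 1),
          ((-1 : ℤ) ^ (N - t) * N.choose t) • p.eval (0 + t • 1) := by
        rw [mul_sum]
        refine sum_congr rfl fun t ht => ?_
        obtain ⟨u, rfl⟩ := Nat.exists_eq_add_of_le (Nat.lt_succ_iff.mp (mem_range.mp ht))
        rw [zsmul_eq_mul, nsmul_one, zero_add, Nat.add_sub_cancel_left]
        have hsq : ((-1 : R) ^ u) * (-1) ^ u = 1 := by
          rw [← mul_pow, neg_one_mul, neg_neg, one_pow]
        push_cast
        linear_combination (-((-1 : R) ^ t * ((t + u).choose t : R) * p.eval (t : R))) * hsq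
    _ = 0 := by rw [h, Pi.zero_apply, mul_zero]

noncomputable def Cinv (b c v s : ℕ) : ℚ :=
  (-1 : ℚ) ^ (s - v) * ((b + s - 1)! * (c + v - 1)! * (b + s - v - 1)! /
    ((b - 1)! * (v - 1)! * (s - v)! * (b + c + s - 1)!))

section Cinv

variable {b c : ℕ}

lemma Bfun_eq_sum_Cinv (n' m' : ℤ) (s : ℕ) :
    Bfun b c n' m' s = ∑ v ∈ Icc 1 s, Cinv b c v s * ibinom n' (v - m') :=
  rfl

lemma Cinv_mul_Cfun_self (j : ℕ) : Cinv b c j j * Cfun b c j j = 1 := by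
  rw [Cinv, Cfun, if_pos ⟨le_rfl, Nat.le_add_left j b⟩, Nat.sub_self, Nat.add_sub_cancel,
    Nat.factorial_zero, Nat.cast_one]
  field_simp

lemma Cinv_mul_Cfun_add (hb : 0 < b) {v N t : ℕ} (hN : 0 < N) (ht : t ≤ N) :
    Cinv b c v (v + t) * Cfun b c (v + t) (v + N) =
      (b ! * (v + N - 1)! * (c + v - 1)! / ((b - 1)! * (v - 1)! * (c + v + N - 1)! * N !) : ℚ) *
        ((-1) ^ t * N.choose t * (b + t - 1).descFactorial (N - 1)) := by
  rw [Cinv, Cfun, Nat.add_sub_cancel_left, show b + (v + t) - v - 1 = b + t - 1 by omega,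
    ← add_assoc c v N]
  by_cases hfit : v + N ≤ b + (v + t)
  · rw [if_pos ⟨by omega, hfit⟩, show v + N - (v + t) = N - t by omega,
      show b + (v + t) - (v + N) = b + t - N by omega]
    have hchoose : (N.choose t * t ! * (N - t)! : ℚ) = N ! := by
      exact_mod_cast Nat.choose_mul_factorial_mul_factorial ht
    have hdesc : ((b + t - N)! * (b + t - 1).descFactorial (N - 1) : ℚ) = (b + t - 1)! := by
      rw [← Nat.sub_sub_sub_cancel_right (by omega : 1 ≤ N)]
      exact_mod_cast Nat.factorial_mul_descFactorial (by omega)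
    have hchoose_ne : (N.choose t : ℚ) ≠ 0 := Nat.cast_ne_zero.mpr (Nat.choose_pos ht).ne'
    rw [← hchoose, ← hdesc]
    field_simp
  · rw [if_neg fun h => hfit h.2, Nat.descFactorial_eq_zero_iff_lt.mpr (by omega)]
    simp

lemma sum_Cinv_mul_Cfun_of_lt (hb : 0 < b) {v j : ℕ} (hvj : v < j) :
    ∑ s ∈ Icc v j, Cinv b c v s * Cfun b c s j = 0 := by
  obtain ⟨N, hN, rfl⟩ : ∃ N, 0 < N ∧ j = v + N := ⟨j - v, by omega, by omega⟩
  set P : ℚ[X] := (descPochhammer ℚ (N - 1)).comp (X + C ((b : ℚ) - 1))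
  have hPdeg : P.natDegree < N := by
    rw [natDegree_comp, descPochhammer_natDegree, natDegree_X_add_C, mul_one]
    omega
  have hPeval (t : ℕ) : P.eval (t : ℚ) = (b + t - 1).descFactorial (N - 1) := by
    rw [eval_comp, eval_add, eval_X, eval_C, ← descPochhammer_eval_eq_descFactorial,
      Nat.cast_sub (by omega : 1 ≤ b + t)]
    push_cast
    ring_nf
  rw [← Ico_add_one_right_eq_Icc, sum_Ico_eq_sum_range, show v + N + 1 - v = N + 1 by omega,
    sum_congr rfl fun t ht => by
      rw [Cinv_mul_Cfun_add hb hN (Nat.lt_succ_iff.mp (mem_range.mp ht)), ← hPeval],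
    ← mul_sum, sum_range_alternating_choose_mul_eval_eq_zero hPdeg, mul_zero]

lemma sum_Cinv_mul_Cfun (hb : 0 < b) {v j : ℕ} (hvj : v ≤ j) :
    ∑ s ∈ Icc v j, Cinv b c v s * Cfun b c s j = if v = j then 1 else 0 := by
  split_ifs with h
  · rw [h, Icc_self, sum_singleton, Cinv_mul_Cfun_self]
  · exact sum_Cinv_mul_Cfun_of_lt hb (lt_of_le_of_ne hvj h)

end Cinv

theorem statement_4_general (b c : ℕ) (hb : 0 < b) (n' m' : ℤ) (j : ℕ) (hj : 0 < j) :
    ∑ s ∈ Finset.Icc 1 j, Bfun b c n' m' s * Cfun b c s j = ibinom n' ((j : ℤ) - m') := by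
  calc ∑ s ∈ Icc 1 j, Bfun b c n' m' s * Cfun b c s j
      = ∑ v ∈ Icc 1 j, ibinom n' (v - m') * ∑ s ∈ Icc v j, Cinv b c v s * Cfun b c s j := by
        simp_rw [Bfun_eq_sum_Cinv, sum_mul, mul_sum]
        rw [sum_comm' (t' := Icc 1 j) (s' := fun v => Icc v j)
          fun s v => by simp only [mem_Icc]; omega]
        exact sum_congr rfl fun v _ => sum_congr rfl fun s _ => by ring
    _ = ∑ v ∈ Icc 1 j, ibinom n' (v - m') * if v = j then 1 else 0 :=
        sum_congr rfl fun v hv => by rw [sum_Cinv_mul_Cfun hb (mem_Icc.mp hv).2]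
    _ = ibinom n' (j - m') := by simp [hj.ne']

/-- `∑_{s=1}^{j} B(s) ⬝ C(b,c,s,j) = binom(n', j-m')`. -/
theorem statement_4 (b c : ℕ) (hb : 0 < b) (hc : 0 < c) (n' m' : ℤ) (j : ℕ) (hj : 0 < j) :
    ∑ s ∈ Finset.Icc 1 j, Bfun b c n' m' s * Cfun b c s j = ibinom n' ((j : ℤ) - m') :=
  statement_4_general b c hb n' m' j hj
end

section
/- Let $a,b,c$ be positive integers. Then $\prod_{i=1}^{a} A(b,c,i,i)\cdot C(b,c,i,i) = \prod_{i=1}^{a}\prod_{j=1}^{b}\prod_{k=1}^{c}\frac{i+j+k-1}{i+j+k-2}$; equivalently, $\prod_{i=1}^{a}\frac{(i-1)!\,(b+c+i-1)!}{(b+i-1)!\,(c+i-1)!} = \prod_{i=1}^{a}\prod_{j=1}^{b}\prod_{k=1}^{c}\frac{i+j+k-1}{i+j+k-2}$. -/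
/-! The product over `k` telescopes to `(i + j + c - 1) / (i + j - 1)`, which is the ratio of
consecutive values of `j ↦ (c + i + j - 1)! / (i + j - 1)!`, so the product over `j` telescopes
too. On the diagonal `A(b,c,i,i) = 1` and `C(b,c,i,i)` is exactly the resulting factorial ratio. -/

open Finset Nat

theorem prod_Icc_div_pred_eq {G₀ : Type*} [CommGroupWithZero G₀] (f : ℕ → G₀) (n : ℕ)
    (hf : ∀ k ≤ n, f k ≠ 0) : ∏ k ∈ Icc 1 n, f k / f (k - 1) = f n / f 0 := by
  induction n with
  | zero => simp [div_self (hf 0 le_rfl)]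
  | succ n ih =>
    rw [prod_Icc_succ_top (by omega), ih fun k hk => hf k (by omega), Nat.add_sub_cancel,
      div_mul_div_cancel₀' (hf n (by omega))]

theorem macmahon_prod_k (i j c : ℕ) (hi : 1 ≤ i) (hj : 1 ≤ j) :
    ∏ k ∈ Icc 1 c, ((i : ℚ) + j + k - 1) / ((i : ℚ) + j + k - 2) =
      ((i : ℚ) + j + c - 1) / ((i : ℚ) + j - 1) := by
  have hpos : ∀ k : ℕ, (0 : ℚ) < i + j + k - 1 := fun k => by
    have : (1 : ℚ) ≤ i := by exact_mod_cast hi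
    have : (1 : ℚ) ≤ j := by exact_mod_cast hj
    linarith [k.cast_nonneg (α := ℚ)]
  have key := prod_Icc_div_pred_eq (fun k : ℕ => (i : ℚ) + j + k - 1) c
    fun k _ => (hpos k).ne'
  simp only [Nat.cast_zero, add_zero] at key
  rw [← key]
  refine prod_congr rfl fun k hk => ?_
  rw [Nat.cast_pred (mem_Icc.mp hk).1]
  ring_nf

theorem macmahon_prod_jk (i b c : ℕ) (hi : 1 ≤ i) :
    ∏ j ∈ Icc 1 b, ∏ k ∈ Icc 1 c, ((i : ℚ) + j + k - 1) / ((i : ℚ) + j + k - 2) =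
      ((i - 1)! * (b + c + i - 1)! : ℚ) / ((b + i - 1)! * (c + i - 1)!) := by
  have key := prod_Icc_div_pred_eq
    (fun j : ℕ => ((c + i + j - 1)! : ℚ) / (i + j - 1)!) b fun _ _ => by positivity
  simp only [Nat.add_zero] at key
  rw [prod_congr rfl fun j hj => macmahon_prod_k i j c hi (mem_Icc.mp hj).1]
  calc ∏ j ∈ Icc 1 b, ((i : ℚ) + j + c - 1) / ((i : ℚ) + j - 1)
      = ∏ j ∈ Icc 1 b, (((c + i + j - 1)! : ℚ) / (i + j - 1)!) /
          (((c + i + (j - 1) - 1)! : ℚ) / (i + (j - 1) - 1)!) := by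
        refine prod_congr rfl fun j hj => ?_
        obtain ⟨p, rfl⟩ : ∃ p, i = p + 1 := ⟨i - 1, by omega⟩
        obtain ⟨q, rfl⟩ : ∃ q, j = q + 1 := ⟨j - 1, by have := (mem_Icc.mp hj).1; omega⟩
        rw [show c + (p + 1) + (q + 1) - 1 = (c + p + q) + 1 by omega,
          show p + 1 + (q + 1) - 1 = (p + q) + 1 by omega,
          show c + (p + 1) + (q + 1 - 1) - 1 = c + p + q by omega,
          show p + 1 + (q + 1 - 1) - 1 = p + q by omega,
          factorial_succ, factorial_succ]
        have hden : (p : ℚ) + q + 1 ≠ 0 := by positivity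
        push_cast
        rw [show (p : ℚ) + 1 + (q + 1) - 1 = p + q + 1 by ring]
        field_simp
        ring
    _ = ((i - 1)! * (b + c + i - 1)! : ℚ) / ((b + i - 1)! * (c + i - 1)!) := by
        rw [key, show c + i + b - 1 = b + c + i - 1 by omega, show i + b - 1 = b + i - 1 by omega]
        field_simp

theorem macmahon_eq_prod_factorial (a b c : ℕ) :
    macmahon a b c = ∏ i ∈ Icc 1 a,
      ((i - 1)! * (b + c + i - 1)! : ℚ) / ((b + i - 1)! * (c + i - 1)!) :=
  prod_congr rfl fun i hi => macmahon_prod_jk i b c (mem_Icc.mp hi).1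

theorem Afun_self (b c i : ℕ) : Afun b c i i = 1 := by
  rw [Afun, if_pos ⟨le_rfl, Nat.le_add_left i c⟩, Nat.sub_self, Nat.add_sub_cancel,
    factorial_zero, Nat.cast_one, mul_one, div_eq_one_iff_eq (by positivity)]
  ring

theorem Cfun_self (b c i : ℕ) :
    Cfun b c i i = ((i - 1)! * (b + c + i - 1)! : ℚ) / ((b + i - 1)! * (c + i - 1)!) := by
  rw [Cfun, if_pos ⟨le_rfl, Nat.le_add_left i b⟩, Nat.sub_self, Nat.add_sub_cancel,
    factorial_zero, Nat.cast_one, mul_one]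
  field_simp

theorem statement_8_general (a b c : ℕ) :
    (∏ i ∈ Finset.Icc 1 a, Afun b c i i * Cfun b c i i) = macmahon a b c ∧
    (∏ i ∈ Finset.Icc 1 a,
        (Nat.factorial (i - 1) * Nat.factorial (b + c + i - 1) : ℚ) /
          (Nat.factorial (b + i - 1) * Nat.factorial (c + i - 1)))
      = macmahon a b c := by
  simp only [Afun_self, Cfun_self, one_mul, macmahon_eq_prod_factorial, and_self]

/-- `∏_{i=1}^{a} A(b,c,i,i) C(b,c,i,i)` equals MacMahon's product;
equivalently `∏_{i=1}^{a} (i-1)!(b+c+i-1)!/((b+i-1)!(c+i-1)!)` equals it. -/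
theorem statement_8 (a b c : ℕ) (ha : 0 < a) (hb : 0 < b) (hc : 0 < c) :
    (∏ i ∈ Finset.Icc 1 a, Afun b c i i * Cfun b c i i) = macmahon a b c ∧
    (∏ i ∈ Finset.Icc 1 a,
        (Nat.factorial (i - 1) * Nat.factorial (b + c + i - 1) : ℚ) /
          (Nat.factorial (b + i - 1) * Nat.factorial (c + i - 1)))
      = macmahon a b c :=
  statement_8_general a b c
end

section
/- Let $b,c$ be positive integers. For all positive integers $i,j$ with $j \le i$: $\sum_{s=j}^{i} A(b,c,i,s)\cdot (-1)^{s-j}\,\frac{(s-1)!\,(b+j-1)!\,(c+s-j-1)!}{(c-1)!\,(j-1)!\,(b+s-1)!\,(s-j)!} = \delta_{i,j}$, where $\delta_{i,j}$ is $1$ if $i = j$ and $0$ otherwise. -/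
/-!
Multiplying the two factorial expressions, everything except a factor depending only on `i`
and `j` (equal to `1` when `i = j`) collapses to `∑ₜ (-1)ᵗ C(c-1+t, t) C(c, i-j-t)`. Since
`(-1)ᵗ C(c-1+t, t) = C(-c, t)`, this is the Chu–Vandermonde convolution `C(-c + c, i-j)`,
i.e. the coefficient of `x^(i-j)` in `(1+x)^(-c) (1+x)^c = 1`.
-/

open Finset Nat

theorem Ring.choose_neg_natCast_int {c : ℕ} (hc : 0 < c) (k : ℕ) :
    Ring.choose (-(c : ℤ)) k = (-1) ^ k * ((c - 1 + k).choose k : ℤ) := by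
  rw [Ring.choose_neg, Int.negOnePow_def, Units.smul_def,
    show (c : ℤ) + k - 1 = ((c - 1 + k : ℕ) : ℤ) by omega, Ring.choose_natCast]
  simp

theorem sum_antidiagonal_neg_one_pow_mul_choose_mul_choose {c : ℕ} (hc : 0 < c) (d : ℕ) :
    ∑ p ∈ antidiagonal d, (-1 : ℤ) ^ p.1 * (c - 1 + p.1).choose p.1 * c.choose p.2 =
      if d = 0 then 1 else 0 := by
  have h := Ring.add_choose_eq d (Commute.all (-(c : ℤ)) c)
  simp only [neg_add_cancel, Ring.choose_zero_ite, Ring.choose_neg_natCast_int hc,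
    Ring.choose_natCast] at h
  rw [h]

theorem Finset.sum_Icc_eq_sum_antidiagonal {M : Type*} [AddCommMonoid M] {i j : ℕ} (h : j ≤ i)
    (f : ℕ → ℕ → M) :
    ∑ s ∈ Icc j i, f (s - j) (i - s) = ∑ p ∈ antidiagonal (i - j), f p.1 p.2 := by
  refine sum_nbij' (fun s => (s - j, i - s)) (fun p => p.1 + j) ?_ ?_ ?_ ?_ (fun _ _ => rfl)
  all_goals intro x hx
  all_goals simp only [mem_Icc, HasAntidiagonal.mem_antidiagonal, Prod.ext_iff] at hx ⊢
  all_goals omega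

noncomputable def Ainv (b c i j : ℕ) : ℚ :=
  (-1 : ℚ) ^ (i - j) * ((i - 1)! * (b + j - 1)! * (c + i - j - 1)! /
    ((c - 1)! * (j - 1)! * (b + i - 1)! * (i - j)!))

theorem Afun_mul_Ainv {b c i j s : ℕ} (hc : 0 < c) (hjs : j ≤ s) (hsi : s ≤ i) :
    Afun b c i s * Ainv b c s j =
      (i - 1)! * (b + j - 1)! / ((b + i - 1)! * (j - 1)!) *
        (((-1 : ℤ) ^ (s - j) * (c - 1 + (s - j)).choose (s - j) * c.choose (i - s) : ℤ) : ℚ) := by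
  rw [Afun, Ainv]
  split_ifs with h
  · push_cast
    rw [Nat.cast_choose ℚ (Nat.le_add_left (s - j) (c - 1)),
      Nat.cast_choose ℚ (by omega : i - s ≤ c), Nat.add_sub_cancel, show c - (i - s) = c + s - i by omega,
      show c + s - j - 1 = c - 1 + (s - j) by omega]
    field_simp
  · rw [Nat.choose_eq_zero_of_lt (by omega : c < i - s)]
    simp

theorem statement_11_general (b c : ℕ) (hc : 0 < c) (i j : ℕ) (hji : j ≤ i) :
    ∑ s ∈ Finset.Icc j i, Afun b c i s *
        ((-1 : ℚ) ^ (s - j) *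
          ((Nat.factorial (s - 1) * Nat.factorial (b + j - 1) * Nat.factorial (c + s - j - 1) : ℚ) /
            (Nat.factorial (c - 1) * Nat.factorial (j - 1) * Nat.factorial (b + s - 1) *
              Nat.factorial (s - j))))
      = if i = j then 1 else 0 := by
  change ∑ s ∈ Icc j i, Afun b c i s * Ainv b c s j = _
  rw [sum_congr rfl fun s hs => Afun_mul_Ainv hc (mem_Icc.1 hs).1 (mem_Icc.1 hs).2, ← mul_sum,
    sum_Icc_eq_sum_antidiagonal hji
      (fun t u => (((-1 : ℤ) ^ t * (c - 1 + t).choose t * c.choose u : ℤ) : ℚ)),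
    ← Int.cast_sum, sum_antidiagonal_neg_one_pow_mul_choose_mul_choose hc]
  by_cases hij : i = j
  · subst hij
    simp [field]
  · simp [hij, show i - j ≠ 0 by omega]

/-- the displayed signed factorial coefficients form the inverse
of the lower-triangular matrix `(A(b,c,i,j))`. -/
theorem statement_11 (b c : ℕ) (hb : 0 < b) (hc : 0 < c) (i j : ℕ) (hi : 0 < i) (hj : 0 < j)
    (hji : j ≤ i) :
    ∑ s ∈ Finset.Icc j i, Afun b c i s *
        ((-1 : ℚ) ^ (s - j) *
          ((Nat.factorial (s - 1) * Nat.factorial (b + j - 1) * Nat.factorial (c + s - j - 1) : ℚ) /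
            (Nat.factorial (c - 1) * Nat.factorial (j - 1) * Nat.factorial (b + s - 1) *
              Nat.factorial (s - j))))
      = if i = j then 1 else 0 :=
  statement_11_general b c hc i j hji
end

section
/- Let $b,c$ be positive integers. For all positive integers $v,j$ with $v \le j$: $\sum_{s=v}^{j} (-1)^{s-v}\,\frac{(b+s-1)!\,(c+v-1)!\,(b+s-v-1)!}{(b-1)!\,(v-1)!\,(s-v)!\,(b+c+s-1)!}\cdot C(b,c,s,j) = \delta_{v,j}$, where $\delta_{v,j}$ is $1$ if $v = j$ and $0$ otherwise. -/
/-!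
Multiplying out, the factorials `(b+s-1)!` and `(b+c+s-1)!` cancel, and writing `s = v + t`,
`j = v + m`, the `s`-th term becomes a constant multiple of `(-1)^t C(m,t) C(b-1+t, m-1)`.
Summed over `t`, this is (up to sign) the `m`-th forward difference of `t ↦ C(b-1+t, m-1)`, a
polynomial of degree `m - 1`, so it vanishes when `m ≥ 1`; it is read off as the coefficient of
`X^(m-1)` in `(X+1)^(b-1) (1 - (X+1))^m`.
-/

open Finset Polynomial Nat

theorem sum_range_neg_one_pow_mul_choose_mul_choose_eq_zero {R : Type*} [CommRing R]
    {n k m : ℕ} (hkm : k < m) :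
    ∑ t ∈ range (m + 1), (-1 : R) ^ t * m.choose t * (n + t).choose k = 0 := by
  have hpoly : ∑ t ∈ range (m + 1), C ((-1 : R) ^ t * m.choose t) * (X + 1) ^ (n + t) =
      C ((-1) ^ m) * ((X + 1) ^ n * X ^ m) :=
    calc ∑ t ∈ range (m + 1), C ((-1 : R) ^ t * m.choose t) * (X + 1) ^ (n + t)
        = (X + 1) ^ n * ∑ t ∈ range (m + 1), (-(X + 1)) ^ t * 1 ^ (m - t) * (m.choose t : R[X]) := by
          rw [mul_sum]
          refine sum_congr rfl fun t _ => ?_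
          rw [pow_add, neg_pow (X + 1 : R[X]), C_mul, C_pow, map_neg, map_one, map_natCast]
          ring
      _ = (X + 1) ^ n * (-(X + 1) + 1) ^ m := by rw [← add_pow]
      _ = C ((-1) ^ m) * ((X + 1) ^ n * X ^ m) := by
          rw [C_pow, map_neg, map_one]
          ring
  simpa only [finsetSum_coeff, coeff_C_mul, coeff_X_add_one_pow, coeff_mul_X_pow',
    if_neg hkm.not_ge, mul_zero] using congrArg (coeff · k) hpoly

noncomputable def leftInvCoeff (b c v s : ℕ) : ℚ :=
  (-1 : ℚ) ^ (s - v) *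
    ((b + s - 1)! * (c + v - 1)! * (b + s - v - 1)! /
      ((b - 1)! * (v - 1)! * (s - v)! * (b + c + s - 1)!) : ℚ)

theorem leftInvCoeff_mul_Cfun_self (b c v : ℕ) : leftInvCoeff b c v v * Cfun b c v v = 1 := by
  rw [leftInvCoeff, Cfun, if_pos ⟨le_rfl, by omega⟩]
  simp only [Nat.sub_self, add_tsub_cancel_right, pow_zero, factorial_zero, cast_one]
  field_simp

theorem leftInvCoeff_mul_Cfun_add {b c v m t : ℕ} (hb : 0 < b) (hm : 0 < m) (ht : t ≤ m) :
    leftInvCoeff b c v (v + t) * Cfun b c (v + t) (v + m) =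
      (b ! * (v + m - 1)! * (c + v - 1)! * (m - 1)! /
          ((b - 1)! * (v - 1)! * (c + v + m - 1)! * m !) : ℚ) *
        ((-1) ^ t * m.choose t * (b - 1 + t).choose (m - 1)) := by
  rw [leftInvCoeff, Cfun]
  split_ifs with hC
  · rw [cast_choose ℚ ht, cast_choose ℚ (show m - 1 ≤ b - 1 + t by omega),
      show v + t - v = t by omega, show b + (v + t) - v - 1 = b + t - 1 by omega,
      show v + m - (v + t) = m - t by omega, show b + (v + t) - (v + m) = b + t - m by omega,
      show b - 1 + t - (m - 1) = b + t - m by omega, show b - 1 + t = b + t - 1 by omega,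
      show c + (v + m) - 1 = c + v + m - 1 by omega]
    field_simp
  · rw [choose_eq_zero_of_lt (show b - 1 + t < m - 1 by omega)]
    simp

theorem statement_12_general (b c : ℕ) (hb : 0 < b) (v j : ℕ)
    (hvj : v ≤ j) :
    ∑ s ∈ Finset.Icc v j,
        ((-1 : ℚ) ^ (s - v) *
          ((Nat.factorial (b + s - 1) * Nat.factorial (c + v - 1) * Nat.factorial (b + s - v - 1) : ℚ) /
            (Nat.factorial (b - 1) * Nat.factorial (v - 1) * Nat.factorial (s - v) *
              Nat.factorial (b + c + s - 1)))) * Cfun b c s j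
      = if v = j then 1 else 0 := by
  change ∑ s ∈ Icc v j, leftInvCoeff b c v s * Cfun b c s j = _
  obtain ⟨m, rfl⟩ := Nat.exists_eq_add_of_le hvj
  rcases Nat.eq_zero_or_pos m with rfl | hm
  · simp [leftInvCoeff_mul_Cfun_self]
  rw [if_neg (by omega), ← Ico_add_one_right_eq_Icc, sum_Ico_eq_sum_range,
    show v + m + 1 - v = m + 1 by omega,
    sum_congr rfl fun t ht => leftInvCoeff_mul_Cfun_add hb hm (Nat.lt_succ_iff.mp (mem_range.mp ht)),
    ← mul_sum, sum_range_neg_one_pow_mul_choose_mul_choose_eq_zero (Nat.sub_lt hm one_pos), mul_zero]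

/-- the displayed signed factorial coefficients form a left
inverse of the upper-triangular matrix `(C(b,c,i,j))`. -/
theorem statement_12 (b c : ℕ) (hb : 0 < b) (hc : 0 < c) (v j : ℕ) (hv : 0 < v) (hj : 0 < j)
    (hvj : v ≤ j) :
    ∑ s ∈ Finset.Icc v j,
        ((-1 : ℚ) ^ (s - v) *
          ((Nat.factorial (b + s - 1) * Nat.factorial (c + v - 1) * Nat.factorial (b + s - v - 1) : ℚ) /
            (Nat.factorial (b - 1) * Nat.factorial (v - 1) * Nat.factorial (s - v) *
              Nat.factorial (b + c + s - 1)))) * Cfun b c s j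
      = if v = j then 1 else 0 :=
  statement_12_general b c hb v j hvj
end
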